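/- arXiv:1001.1118 — 9 statements merged into one kernel-verified Lean document; each statement's English description precedes it below -/
import Mathlib

section
/- In the two-parameter quantum group U_q(g) of type G₂, one has [x₁, [x₂⁻,x₁⁻]] = p₂₁(1 − q³)·x₂⁻. -/
theorem stmt4 (k U : Type) [Field k] [Ring U] [Algebra k U]
    (q p12 p21 : kˣ) (hq : (p12:k) * (p21:k) = (q:k)⁻¹ ^ 3)
    (x1 x2 x1m x2m : U) (g1 g2 f1 f2 : Uˣ)
    (hg1g2 : (g1:U) * g2 = (g2:U) * g1)
    (hg1f1 : (g1:U) * f1 = (f1:U) * g1)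
    (hg1f2 : (g1:U) * f2 = (f2:U) * g1)
    (hg2f1 : (g2:U) * f1 = (f1:U) * g2)
    (hg2f2 : (g2:U) * f2 = (f2:U) * g2)
    (hf1f2 : (f1:U) * f2 = (f2:U) * f1)
    (hx1g1 : x1 * g1 = ((q:k)^3) • ((g1:U) * x1))
    (hx1g2 : x1 * g2 = (p12:k) • ((g2:U) * x1))
    (hx2g1 : x2 * g1 = (p21:k) • ((g1:U) * x2))
    (hx2g2 : x2 * g2 = (q:k) • ((g2:U) * x2))
    (hx1f1 : x1 * f1 = ((q:k)^3) • ((f1:U) * x1))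
    (hx1f2 : x1 * f2 = (p21:k) • ((f2:U) * x1))
    (hx2f1 : x2 * f1 = (p12:k) • ((f1:U) * x2))
    (hx2f2 : x2 * f2 = (q:k) • ((f2:U) * x2))
    (hx1mg1 : x1m * g1 = ((q:k)^3)⁻¹ • ((g1:U) * x1m))
    (hx1mg2 : x1m * g2 = (p12:k)⁻¹ • ((g2:U) * x1m))
    (hx2mg1 : x2m * g1 = (p21:k)⁻¹ • ((g1:U) * x2m))
    (hx2mg2 : x2m * g2 = (q:k)⁻¹ • ((g2:U) * x2m))
    (hx1mf1 : x1m * f1 = ((q:k)^3)⁻¹ • ((f1:U) * x1m))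
    (hx1mf2 : x1m * f2 = (p21:k)⁻¹ • ((f2:U) * x1m))
    (hx2mf1 : x2m * f1 = (p12:k)⁻¹ • ((f1:U) * x2m))
    (hx2mf2 : x2m * f2 = (q:k)⁻¹ • ((f2:U) * x2m))
    (h11 : x1 * x1m - ((q:k)^3) • (x1m * x1) = 1 - (g1:U) * f1)
    (h12 : x1 * x2m - (p21:k) • (x2m * x1) = 0)
    (h21 : x2 * x1m - (p12:k) • (x1m * x2) = 0)
    (h22 : x2 * x2m - (q:k) • (x2m * x2) = 1 - (g2:U) * f2) :
    x1 * (x2m * x1m - (p12:k)⁻¹ • (x1m * x2m)) - ((q:k)^3 * (p21:k)) • ((x2m * x1m - (p12:k)⁻¹ • (x1m * x2m)) * x1) = ((p21:k) * (1 - (q:k)^3)) • x2m := by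
  have hq0 : (q:k) ≠ 0 := Units.ne_zero q
  have hp12 : (p12:k) ≠ 0 := Units.ne_zero p12
  have hp21 : (p21:k) ≠ 0 := Units.ne_zero p21
  have hq' : (p12:k) * (p21:k) * (q:k)^3 = 1 := by
    rw [hq, inv_pow, inv_mul_cancel₀ (pow_ne_zero 3 hq0)]
  have hinv : (p12:k)⁻¹ = (p21:k) * (q:k)^3 := by
    field_simp
    linear_combination -hq'
  have e1 : x1 * x2m = (p21:k) • (x2m * x1) := sub_eq_zero.mp h12
  have e2 : x1 * x1m = ((q:k)^3) • (x1m * x1) + (1 - (g1:U) * f1) := by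
    rw [← h11]; abel
  have e3 : x2m * ((g1:U) * f1) = ((q:k)^3) • ((g1:U) * ((f1:U) * x2m)) := by
    rw [← mul_assoc, hx2mg1, smul_mul_assoc, mul_assoc, hx2mf1, mul_smul_comm,
      smul_smul, hinv, inv_mul_cancel_left₀ hp21]
  have hA : x1 * (x2m * x1m) = ((p21:k) * (q:k)^3) • (x2m * (x1m * x1))
      + (p21:k) • x2m - ((p21:k) * (q:k)^3) • ((g1:U) * ((f1:U) * x2m)) := by
    rw [← mul_assoc, e1, smul_mul_assoc, mul_assoc, e2, mul_add, mul_sub, mul_one, e3,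
      mul_smul_comm]
    module
  have hB : x1 * (x1m * x2m) = ((q:k)^3 * (p21:k)) • (x1m * (x2m * x1))
      + x2m - ((g1:U) * ((f1:U) * x2m)) := by
    rw [← mul_assoc, e2, add_mul, smul_mul_assoc, mul_assoc, e1, mul_smul_comm,
      sub_mul, one_mul, mul_assoc]
    module
  rw [mul_sub, mul_smul_comm, sub_mul, smul_mul_assoc, hA, hB, hinv]
  simp only [mul_assoc]
  module
end

section
/- In the two-parameter quantum group U_q(g) of type G₂, one has [x₁, [[x₁⁻,x₂⁻],x₂⁻]] = −q⁻¹(1 − q⁻²)(1 − q⁻³)·(x₂⁻)²·g₁f₁. -/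
theorem stmt5 (k U : Type) [Field k] [Ring U] [Algebra k U]
    (q p12 p21 : kˣ) (hq : (p12:k) * (p21:k) = (q:k)⁻¹ ^ 3)
    (x1 x2 x1m x2m : U) (g1 g2 f1 f2 : Uˣ)
    (hg1g2 : (g1:U) * g2 = (g2:U) * g1)
    (hg1f1 : (g1:U) * f1 = (f1:U) * g1)
    (hg1f2 : (g1:U) * f2 = (f2:U) * g1)
    (hg2f1 : (g2:U) * f1 = (f1:U) * g2)
    (hg2f2 : (g2:U) * f2 = (f2:U) * g2)
    (hf1f2 : (f1:U) * f2 = (f2:U) * f1)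
    (hx1g1 : x1 * g1 = ((q:k)^3) • ((g1:U) * x1))
    (hx1g2 : x1 * g2 = (p12:k) • ((g2:U) * x1))
    (hx2g1 : x2 * g1 = (p21:k) • ((g1:U) * x2))
    (hx2g2 : x2 * g2 = (q:k) • ((g2:U) * x2))
    (hx1f1 : x1 * f1 = ((q:k)^3) • ((f1:U) * x1))
    (hx1f2 : x1 * f2 = (p21:k) • ((f2:U) * x1))
    (hx2f1 : x2 * f1 = (p12:k) • ((f1:U) * x2))
    (hx2f2 : x2 * f2 = (q:k) • ((f2:U) * x2))
    (hx1mg1 : x1m * g1 = ((q:k)^3)⁻¹ • ((g1:U) * x1m))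
    (hx1mg2 : x1m * g2 = (p12:k)⁻¹ • ((g2:U) * x1m))
    (hx2mg1 : x2m * g1 = (p21:k)⁻¹ • ((g1:U) * x2m))
    (hx2mg2 : x2m * g2 = (q:k)⁻¹ • ((g2:U) * x2m))
    (hx1mf1 : x1m * f1 = ((q:k)^3)⁻¹ • ((f1:U) * x1m))
    (hx1mf2 : x1m * f2 = (p21:k)⁻¹ • ((f2:U) * x1m))
    (hx2mf1 : x2m * f1 = (p12:k)⁻¹ • ((f1:U) * x2m))
    (hx2mf2 : x2m * f2 = (q:k)⁻¹ • ((f2:U) * x2m))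
    (h11 : x1 * x1m - ((q:k)^3) • (x1m * x1) = 1 - (g1:U) * f1)
    (h12 : x1 * x2m - (p21:k) • (x2m * x1) = 0)
    (h21 : x2 * x1m - (p12:k) • (x1m * x2) = 0)
    (h22 : x2 * x2m - (q:k) • (x2m * x2) = 1 - (g2:U) * f2) :
    x1 * ((x1m * x2m - (p21:k)⁻¹ • (x2m * x1m)) * x2m - ((p21:k)⁻¹ * (q:k)⁻¹) • (x2m * (x1m * x2m - (p21:k)⁻¹ • (x2m * x1m)))) - ((q:k)^3 * (p21:k)^2) • (((x1m * x2m - (p21:k)⁻¹ • (x2m * x1m)) * x2m - ((p21:k)⁻¹ * (q:k)⁻¹) • (x2m * (x1m * x2m - (p21:k)⁻¹ • (x2m * x1m)))) * x1) = (-((q:k)⁻¹ * (1 - (q:k)⁻¹^2) * (1 - (q:k)⁻¹^3))) • (x2m * x2m * ((g1:U) * (f1:U))) := by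
  have hq0 : (q:k) ≠ 0 := q.ne_zero
  have hp0 : (p21:k) ≠ 0 := p21.ne_zero
  have hs : ((q:k)⁻¹^3 * (p21:k)⁻¹) * (p12:k)⁻¹ = 1 := by
    have hp120 : (p12:k) ≠ 0 := p12.ne_zero
    rw [← hq]
    field_simp
  have e2m : x1 * x2m = (p21:k) • (x2m * x1) := sub_eq_zero.mp h12
  have e1m : x1 * x1m = ((q:k)^3) • (x1m * x1) + (1 - (g1:U) * f1) := by
    rw [eq_add_of_sub_eq h11]; exact add_comm _ _
  have rg0 : (g1:U) * x2m = (p21:k) • (x2m * g1) := by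
    rw [hx2mg1, smul_smul, mul_inv_cancel₀ hp0, one_smul]
  have rf0 : (f1:U) * x2m = ((q:k)⁻¹^3 * (p21:k)⁻¹) • (x2m * f1) := by
    rw [hx2mf1, smul_smul, hs, one_smul]
  have R1 : ∀ t : U, x1 * (x2m * t) = (p21:k) • (x2m * (x1 * t)) := fun t => by
    rw [← mul_assoc, e2m, smul_mul_assoc, mul_assoc]
  have RG : ∀ t : U, (g1:U) * (x2m * t) = (p21:k) • (x2m * ((g1:U) * t)) := fun t => by
    rw [← mul_assoc, rg0, smul_mul_assoc, mul_assoc]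
  have RF : ∀ t : U, (f1:U) * (x2m * t) = ((q:k)⁻¹^3 * (p21:k)⁻¹) • (x2m * ((f1:U) * t)) := fun t => by
    rw [← mul_assoc, rf0, smul_mul_assoc, mul_assoc]
  have R2 : ∀ t : U, x1 * (x1m * t) = ((q:k)^3) • (x1m * (x1 * t)) + (t - (g1:U) * ((f1:U) * t)) := fun t => by
    rw [← mul_assoc, e1m, add_mul, smul_mul_assoc, mul_assoc, sub_mul, one_mul, mul_assoc]
  simp only [smul_sub, smul_add, smul_smul, mul_sub, sub_mul, mul_add, add_mul,
    smul_mul_assoc, mul_smul_comm, mul_assoc, R1, R2, RG, RF, e2m, e1m, rg0, rf0,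
    one_mul, mul_one]
  match_scalars <;> (field_simp; try ring)
end

section
/- In the two-parameter quantum group U_q(g) of type G₂, one has [x₁, [[[x₁⁻,x₂⁻],x₂⁻],x₂⁻]] = q⁻³(1 − q⁻¹)(1 − q⁻²)(1 − q⁻³)·(x₂⁻)³·g₁f₁. -/
/-!
Write `[a, b]_t = a b - t b a`. If `x b = β b x`, bracketing with `b` on the right obeys the skew
Jacobi identity `[x, [A, b]_t]_{sβ} = [[x, A]_s, b]_{tβ}`. Starting from `[x₁, x₁⁻]_{q³} = 1 - g₁f₁`
and using `g₁f₁ x₂⁻ = q⁻³ x₂⁻ g₁f₁`, the first bracket with `x₂⁻` turns `1 - g₁f₁` into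
`(1 - q⁻³) x₂⁻ g₁f₁`, and each further bracket `[-, x₂⁻]_t` multiplies the error term by `x₂⁻`
on the left and by the scalar `q⁻³ - t p₂₁`.
-/

section SkewBracket

variable {k U : Type*} [CommRing k] [Ring U] [Algebra k U]

def skewBracket (t : k) (a b : U) : U := a * b - t • (b * a)

theorem skewBracket_mul_left_eq_zero {r r' : k} {a a' b : U} (ha : skewBracket r a b = 0)
    (ha' : skewBracket r' a' b = 0) : skewBracket (r * r') (a * a') b = 0 := by
  rw [skewBracket, sub_eq_zero] at ha ha' ⊢
  rw [mul_assoc, ha', mul_smul_comm, ← mul_assoc, ha, smul_mul_assoc, smul_smul, mul_comm r',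
    mul_assoc]

theorem skewBracket_skewBracket {s t β : k} {x A b : U} (hxb : skewBracket β x b = 0) :
    skewBracket (s * β) x (skewBracket t A b) = skewBracket (t * β) (skewBracket s x A) b := by
  rw [skewBracket, sub_eq_zero] at hxb
  have hxAb : x * (A * b) = (x * A) * b := (mul_assoc _ _ _).symm
  have hxbA : x * (b * A) = β • (b * (x * A)) := by
    rw [← mul_assoc, hxb, smul_mul_assoc, mul_assoc]
  have hAxb : A * x * b = β • (A * b * x) := by rw [mul_assoc, hxb, mul_smul_comm, mul_assoc]
  simp only [skewBracket, mul_sub, sub_mul, mul_smul_comm, smul_mul_assoc, hxAb, hxbA, hAxb]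
  simp only [mul_assoc, smul_sub, smul_smul]
  module

theorem skewBracket_one_sub_eq {r : k} {G b : U} (hG : skewBracket r G b = 0) :
    skewBracket (1 : k) (1 - G) b = (1 - r) • (b * G) := by
  rw [skewBracket, sub_eq_zero] at hG
  rw [skewBracket, sub_mul, mul_sub, hG, one_smul, one_mul, mul_one]
  module

theorem skewBracket_smul_pow_mul_eq {r u c : k} {G b : U} (hG : skewBracket r G b = 0) (n : ℕ) :
    skewBracket u (c • (b ^ n * G)) b = (c * (r - u)) • (b ^ (n + 1) * G) := by
  rw [skewBracket, sub_eq_zero] at hG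
  rw [skewBracket, smul_mul_assoc, mul_assoc, hG, mul_smul_comm, ← mul_assoc, ← pow_succ,
    mul_smul_comm, ← mul_assoc, ← pow_succ']
  module

end SkewBracket

theorem skewBracket_eq_zero_of_mul_eq_inv_smul {k U : Type*} [Field k] [Ring U] [Algebra k U]
    {t : k} {a b : U} (ht : t ≠ 0) (h : b * a = t⁻¹ • (a * b)) : skewBracket t a b = 0 := by
  rw [skewBracket, h, smul_smul, mul_inv_cancel₀ ht, one_smul, sub_self]

theorem stmt6_general (k U : Type) [Field k] [Ring U] [Algebra k U]
    (q p12 p21 : kˣ) (hq : (p12:k) * (p21:k) = (q:k)⁻¹ ^ 3)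
    (x1 x1m x2m : U) (g1 f1 : Uˣ)
    (hx2mg1 : x2m * g1 = (p21:k)⁻¹ • ((g1:U) * x2m))
    (hx2mf1 : x2m * f1 = (p12:k)⁻¹ • ((f1:U) * x2m))
    (h11 : x1 * x1m - ((q:k)^3) • (x1m * x1) = 1 - (g1:U) * f1)
    (h12 : x1 * x2m - (p21:k) • (x2m * x1) = 0) :
    x1 * (((x1m * x2m - (p21:k)⁻¹ • (x2m * x1m)) * x2m - ((p21:k)⁻¹ * (q:k)⁻¹) • (x2m * (x1m * x2m - (p21:k)⁻¹ • (x2m * x1m)))) * x2m - ((p21:k)⁻¹ * (q:k)⁻¹^2) • (x2m * ((x1m * x2m - (p21:k)⁻¹ • (x2m * x1m)) * x2m - ((p21:k)⁻¹ * (q:k)⁻¹) • (x2m * (x1m * x2m - (p21:k)⁻¹ • (x2m * x1m)))))) - ((q:k)^3 * (p21:k)^3) • ((((x1m * x2m - (p21:k)⁻¹ • (x2m * x1m)) * x2m - ((p21:k)⁻¹ * (q:k)⁻¹) • (x2m * (x1m * x2m - (p21:k)⁻¹ • (x2m * x1m)))) * x2m - ((p21:k)⁻¹ * (q:k)⁻¹^2)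 • (x2m * ((x1m * x2m - (p21:k)⁻¹ • (x2m * x1m)) * x2m - ((p21:k)⁻¹ * (q:k)⁻¹) • (x2m * (x1m * x2m - (p21:k)⁻¹ • (x2m * x1m)))))) * x1) = ((q:k)⁻¹^3 * (1 - (q:k)⁻¹) * (1 - (q:k)⁻¹^2) * (1 - (q:k)⁻¹^3)) • (x2m * x2m * x2m * ((g1:U) * (f1:U))) := by
  have hG : skewBracket ((q:k)⁻¹ ^ 3) ((g1:U) * f1) x2m = 0 := by
    rw [← hq, mul_comm]
    exact skewBracket_mul_left_eq_zero (skewBracket_eq_zero_of_mul_eq_inv_smul p21.ne_zero hx2mg1)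
      (skewBracket_eq_zero_of_mul_eq_inv_smul p12.ne_zero hx2mf1)
  have h1 : skewBracket ((q:k)^3 * p21) x1 (skewBracket (p21:k)⁻¹ x1m x2m)
      = (1 - (q:k)⁻¹ ^ 3) • (x2m ^ 1 * ((g1:U) * f1)) := by
    rw [skewBracket_skewBracket h12, show skewBracket ((q:k)^3) x1 x1m = _ from h11,
      inv_mul_cancel₀ p21.ne_zero, skewBracket_one_sub_eq hG, pow_one]
  have h2 := (skewBracket_skewBracket (t := (p21:k)⁻¹ * (q:k)⁻¹) h12).trans
    (h1 ▸ skewBracket_smul_pow_mul_eq hG 1)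
  have h3 := (skewBracket_skewBracket (t := (p21:k)⁻¹ * (q:k)⁻¹ ^ 2) h12).trans
    (h2 ▸ skewBracket_smul_pow_mul_eq hG 2)
  change skewBracket ((q:k)^3 * (p21:k)^3) x1 _ = _
  rw [show (q:k)^3 * (p21:k)^3 = (q:k)^3 * p21 * p21 * p21 by ring]
  refine h3.trans ?_
  rw [show x2m ^ (2 + 1) = x2m * x2m * x2m by rw [pow_succ, pow_two], ← mul_assoc]
  congr 1
  field_simp
  ring

theorem stmt6 (k U : Type) [Field k] [Ring U] [Algebra k U]
    (q p12 p21 : kˣ) (hq : (p12:k) * (p21:k) = (q:k)⁻¹ ^ 3)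
    (x1 x2 x1m x2m : U) (g1 g2 f1 f2 : Uˣ)
    (hg1g2 : (g1:U) * g2 = (g2:U) * g1)
    (hg1f1 : (g1:U) * f1 = (f1:U) * g1)
    (hg1f2 : (g1:U) * f2 = (f2:U) * g1)
    (hg2f1 : (g2:U) * f1 = (f1:U) * g2)
    (hg2f2 : (g2:U) * f2 = (f2:U) * g2)
    (hf1f2 : (f1:U) * f2 = (f2:U) * f1)
    (hx1g1 : x1 * g1 = ((q:k)^3) • ((g1:U) * x1))
    (hx1g2 : x1 * g2 = (p12:k) • ((g2:U) * x1))
    (hx2g1 : x2 * g1 = (p21:k) • ((g1:U) * x2))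
    (hx2g2 : x2 * g2 = (q:k) • ((g2:U) * x2))
    (hx1f1 : x1 * f1 = ((q:k)^3) • ((f1:U) * x1))
    (hx1f2 : x1 * f2 = (p21:k) • ((f2:U) * x1))
    (hx2f1 : x2 * f1 = (p12:k) • ((f1:U) * x2))
    (hx2f2 : x2 * f2 = (q:k) • ((f2:U) * x2))
    (hx1mg1 : x1m * g1 = ((q:k)^3)⁻¹ • ((g1:U) * x1m))
    (hx1mg2 : x1m * g2 = (p12:k)⁻¹ • ((g2:U) * x1m))
    (hx2mg1 : x2m * g1 = (p21:k)⁻¹ • ((g1:U) * x2m))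
    (hx2mg2 : x2m * g2 = (q:k)⁻¹ • ((g2:U) * x2m))
    (hx1mf1 : x1m * f1 = ((q:k)^3)⁻¹ • ((f1:U) * x1m))
    (hx1mf2 : x1m * f2 = (p21:k)⁻¹ • ((f2:U) * x1m))
    (hx2mf1 : x2m * f1 = (p12:k)⁻¹ • ((f1:U) * x2m))
    (hx2mf2 : x2m * f2 = (q:k)⁻¹ • ((f2:U) * x2m))
    (h11 : x1 * x1m - ((q:k)^3) • (x1m * x1) = 1 - (g1:U) * f1)
    (h12 : x1 * x2m - (p21:k) • (x2m * x1) = 0)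
    (h21 : x2 * x1m - (p12:k) • (x1m * x2) = 0)
    (h22 : x2 * x2m - (q:k) • (x2m * x2) = 1 - (g2:U) * f2) :
    x1 * (((x1m * x2m - (p21:k)⁻¹ • (x2m * x1m)) * x2m - ((p21:k)⁻¹ * (q:k)⁻¹) • (x2m * (x1m * x2m - (p21:k)⁻¹ • (x2m * x1m)))) * x2m - ((p21:k)⁻¹ * (q:k)⁻¹^2) • (x2m * ((x1m * x2m - (p21:k)⁻¹ • (x2m * x1m)) * x2m - ((p21:k)⁻¹ * (q:k)⁻¹) • (x2m * (x1m * x2m - (p21:k)⁻¹ • (x2m * x1m)))))) - ((q:k)^3 * (p21:k)^3) • ((((x1m * x2m - (p21:k)⁻¹ • (x2m * x1m)) * x2m - ((p21:k)⁻¹ * (q:k)⁻¹) • (x2m * (x1m * x2m - (p21:k)⁻¹ • (x2m * x1m)))) * x2m - ((p21:k)⁻¹ * (q:k)⁻¹^2) • (x2m * ((x1m * x2m - (p21:k)⁻¹ • (x2m * x1m)) * x2m - ((p21:k)⁻¹ * (q:k)⁻¹) • (x2m * (x1m * x2m - (p21:k)⁻¹ • (x2m * x1m)))))) * x1) = ((q:k)⁻¹^3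 * (1 - (q:k)⁻¹) * (1 - (q:k)⁻¹^2) * (1 - (q:k)⁻¹^3)) • (x2m * x2m * x2m * ((g1:U) * (f1:U))) :=
  stmt6_general k U q p12 p21 hq x1 x1m x2m g1 f1 hx2mg1 hx2mf1 h11 h12
end

section
/- In the two-parameter quantum group U_q(g) of type G₂, one has [x₂, [[x₁⁻,x₂⁻],x₂⁻]] = p₁₂(1 + q)(1 − q²)·[x₁⁻,x₂⁻]. -/
theorem stmt7 (k U : Type) [Field k] [Ring U] [Algebra k U]
    (q p12 p21 : kˣ) (hq : (p12:k) * (p21:k) = (q:k)⁻¹ ^ 3)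
    (x1 x2 x1m x2m : U) (g1 g2 f1 f2 : Uˣ)
    (hg1g2 : (g1:U) * g2 = (g2:U) * g1)
    (hg1f1 : (g1:U) * f1 = (f1:U) * g1)
    (hg1f2 : (g1:U) * f2 = (f2:U) * g1)
    (hg2f1 : (g2:U) * f1 = (f1:U) * g2)
    (hg2f2 : (g2:U) * f2 = (f2:U) * g2)
    (hf1f2 : (f1:U) * f2 = (f2:U) * f1)
    (hx1g1 : x1 * g1 = ((q:k)^3) • ((g1:U) * x1))
    (hx1g2 : x1 * g2 = (p12:k) • ((g2:U) * x1))
    (hx2g1 : x2 * g1 = (p21:k) • ((g1:U) * x2))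
    (hx2g2 : x2 * g2 = (q:k) • ((g2:U) * x2))
    (hx1f1 : x1 * f1 = ((q:k)^3) • ((f1:U) * x1))
    (hx1f2 : x1 * f2 = (p21:k) • ((f2:U) * x1))
    (hx2f1 : x2 * f1 = (p12:k) • ((f1:U) * x2))
    (hx2f2 : x2 * f2 = (q:k) • ((f2:U) * x2))
    (hx1mg1 : x1m * g1 = ((q:k)^3)⁻¹ • ((g1:U) * x1m))
    (hx1mg2 : x1m * g2 = (p12:k)⁻¹ • ((g2:U) * x1m))
    (hx2mg1 : x2m * g1 = (p21:k)⁻¹ • ((g1:U) * x2m))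
    (hx2mg2 : x2m * g2 = (q:k)⁻¹ • ((g2:U) * x2m))
    (hx1mf1 : x1m * f1 = ((q:k)^3)⁻¹ • ((f1:U) * x1m))
    (hx1mf2 : x1m * f2 = (p21:k)⁻¹ • ((f2:U) * x1m))
    (hx2mf1 : x2m * f1 = (p12:k)⁻¹ • ((f1:U) * x2m))
    (hx2mf2 : x2m * f2 = (q:k)⁻¹ • ((f2:U) * x2m))
    (h11 : x1 * x1m - ((q:k)^3) • (x1m * x1) = 1 - (g1:U) * f1)
    (h12 : x1 * x2m - (p21:k) • (x2m * x1) = 0)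
    (h21 : x2 * x1m - (p12:k) • (x1m * x2) = 0)
    (h22 : x2 * x2m - (q:k) • (x2m * x2) = 1 - (g2:U) * f2) :
    x2 * ((x1m * x2m - (p21:k)⁻¹ • (x2m * x1m)) * x2m - ((p21:k)⁻¹ * (q:k)⁻¹) • (x2m * (x1m * x2m - (p21:k)⁻¹ • (x2m * x1m)))) - ((p12:k) * (q:k)^2) • (((x1m * x2m - (p21:k)⁻¹ • (x2m * x1m)) * x2m - ((p21:k)⁻¹ * (q:k)⁻¹) • (x2m * (x1m * x2m - (p21:k)⁻¹ • (x2m * x1m)))) * x2) = ((p12:k) * (1 + (q:k)) * (1 - (q:k)^2)) • (x1m * x2m - (p21:k)⁻¹ • (x2m * x1m)) := by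
  have hq0 : (q:k) ≠ 0 := q.ne_zero
  have hp12 : (p12:k) ≠ 0 := p12.ne_zero
  have hp21 : (p21:k) ≠ 0 := p21.ne_zero
  have hq1 : (p12:k) * (p21:k) * (q:k)^3 = 1 := by rw [hq]; field_simp
  have hp21inv : ((p21:k))⁻¹ = (p12:k) * (q:k)^3 := by
    field_simp
    linear_combination -hq1
  have hp21val : (p21:k) = ((p12:k) * (q:k)^3)⁻¹ := by
    rw [← hp21inv, inv_inv]
  -- base move lemmas
  have hxa : x2 * x1m = (p12:k) • (x1m * x2) := sub_eq_zero.mp h21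
  have hxb : x2 * x2m = (q:k) • (x2m * x2) + (1 - (g2:U) * f2) := by
    rw [eq_add_of_sub_eq h22, add_comm]
  have hf2a0 : (f2:U) * x1m = ((p12:k) * (q:k)^3)⁻¹ • (x1m * (f2:U)) := by
    rw [← hp21val]
    calc (f2:U) * x1m = (p21:k) • ((p21:k)⁻¹ • ((f2:U) * x1m)) := by
          rw [smul_smul, mul_inv_cancel₀ hp21, one_smul]
      _ = (p21:k) • (x1m * (f2:U)) := by rw [← hx1mf2]
  have hg2a0 : (g2:U) * x1m = (p12:k) • (x1m * (g2:U)) := by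
    calc (g2:U) * x1m = (p12:k) • ((p12:k)⁻¹ • ((g2:U) * x1m)) := by
          rw [smul_smul, mul_inv_cancel₀ hp12, one_smul]
      _ = (p12:k) • (x1m * (g2:U)) := by rw [← hx1mg2]
  have hf2b0 : (f2:U) * x2m = (q:k) • (x2m * (f2:U)) := by
    calc (f2:U) * x2m = (q:k) • ((q:k)⁻¹ • ((f2:U) * x2m)) := by
          rw [smul_smul, mul_inv_cancel₀ hq0, one_smul]
      _ = (q:k) • (x2m * (f2:U)) := by rw [← hx2mf2]
  have hg2b0 : (g2:U) * x2m = (q:k) • (x2m * (g2:U)) := by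
    calc (g2:U) * x2m = (q:k) • ((q:k)⁻¹ • ((g2:U) * x2m)) := by
          rw [smul_smul, mul_inv_cancel₀ hq0, one_smul]
      _ = (q:k) • (x2m * (g2:U)) := by rw [← hx2mg2]
  -- recursive move lemmas
  have hxa' : ∀ t : U, x2 * (x1m * t) = (p12:k) • (x1m * (x2 * t)) := by
    intro t; rw [← mul_assoc, hxa, smul_mul_assoc, mul_assoc]
  have hxb' : ∀ t : U, x2 * (x2m * t)
      = (q:k) • (x2m * (x2 * t)) + (t - ((g2:U) * f2) * t) := by
    intro t
    rw [← mul_assoc, hxb, add_mul, sub_mul, one_mul, smul_mul_assoc, mul_assoc]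
  have hf2a' : ∀ t : U, (f2:U) * (x1m * t)
      = ((p12:k) * (q:k)^3)⁻¹ • (x1m * ((f2:U) * t)) := by
    intro t; rw [← mul_assoc, hf2a0, smul_mul_assoc, mul_assoc]
  have hg2a' : ∀ t : U, (g2:U) * (x1m * t) = (p12:k) • (x1m * ((g2:U) * t)) := by
    intro t; rw [← mul_assoc, hg2a0, smul_mul_assoc, mul_assoc]
  have hf2b' : ∀ t : U, (f2:U) * (x2m * t) = (q:k) • (x2m * ((f2:U) * t)) := by
    intro t; rw [← mul_assoc, hf2b0, smul_mul_assoc, mul_assoc]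
  have hg2b' : ∀ t : U, (g2:U) * (x2m * t) = (q:k) • (x2m * ((g2:U) * t)) := by
    intro t; rw [← mul_assoc, hg2b0, smul_mul_assoc, mul_assoc]
  simp only [hp21inv]
  simp only [mul_add, add_mul, mul_sub, sub_mul, smul_add, smul_sub,
    smul_mul_assoc, mul_smul_comm, smul_smul, mul_assoc, mul_one, one_mul,
    hxa', hxb', hxa, hxb, hf2a', hf2b', hg2a', hg2b', hf2a0, hf2b0, hg2a0, hg2b0]
  match_scalars <;> field_simp <;> ring
end

section
/- In the two-parameter quantum group U_q(g) of type G₂, one has [x₂, [x₂⁻,[x₂⁻,x₁⁻]]] = (1 + q)(1 − q⁻²)·[x₂⁻,x₁⁻]·g₂f₂. -/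
theorem stmt8 (k U : Type) [Field k] [Ring U] [Algebra k U]
    (q p12 p21 : kˣ) (hq : (p12:k) * (p21:k) = (q:k)⁻¹ ^ 3)
    (x1 x2 x1m x2m : U) (g1 g2 f1 f2 : Uˣ)
    (hg1g2 : (g1:U) * g2 = (g2:U) * g1)
    (hg1f1 : (g1:U) * f1 = (f1:U) * g1)
    (hg1f2 : (g1:U) * f2 = (f2:U) * g1)
    (hg2f1 : (g2:U) * f1 = (f1:U) * g2)
    (hg2f2 : (g2:U) * f2 = (f2:U) * g2)
    (hf1f2 : (f1:U) * f2 = (f2:U) * f1)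
    (hx1g1 : x1 * g1 = ((q:k)^3) • ((g1:U) * x1))
    (hx1g2 : x1 * g2 = (p12:k) • ((g2:U) * x1))
    (hx2g1 : x2 * g1 = (p21:k) • ((g1:U) * x2))
    (hx2g2 : x2 * g2 = (q:k) • ((g2:U) * x2))
    (hx1f1 : x1 * f1 = ((q:k)^3) • ((f1:U) * x1))
    (hx1f2 : x1 * f2 = (p21:k) • ((f2:U) * x1))
    (hx2f1 : x2 * f1 = (p12:k) • ((f1:U) * x2))
    (hx2f2 : x2 * f2 = (q:k) • ((f2:U) * x2))
    (hx1mg1 : x1m * g1 = ((q:k)^3)⁻¹ • ((g1:U) * x1m))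
    (hx1mg2 : x1m * g2 = (p12:k)⁻¹ • ((g2:U) * x1m))
    (hx2mg1 : x2m * g1 = (p21:k)⁻¹ • ((g1:U) * x2m))
    (hx2mg2 : x2m * g2 = (q:k)⁻¹ • ((g2:U) * x2m))
    (hx1mf1 : x1m * f1 = ((q:k)^3)⁻¹ • ((f1:U) * x1m))
    (hx1mf2 : x1m * f2 = (p21:k)⁻¹ • ((f2:U) * x1m))
    (hx2mf1 : x2m * f1 = (p12:k)⁻¹ • ((f1:U) * x2m))
    (hx2mf2 : x2m * f2 = (q:k)⁻¹ • ((f2:U) * x2m))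
    (h11 : x1 * x1m - ((q:k)^3) • (x1m * x1) = 1 - (g1:U) * f1)
    (h12 : x1 * x2m - (p21:k) • (x2m * x1) = 0)
    (h21 : x2 * x1m - (p12:k) • (x1m * x2) = 0)
    (h22 : x2 * x2m - (q:k) • (x2m * x2) = 1 - (g2:U) * f2) :
    x2 * (x2m * (x2m * x1m - (p12:k)⁻¹ • (x1m * x2m)) - ((q:k)⁻¹ * (p12:k)⁻¹) • ((x2m * x1m - (p12:k)⁻¹ • (x1m * x2m)) * x2m)) - ((p12:k) * (q:k)^2) • ((x2m * (x2m * x1m - (p12:k)⁻¹ • (x1m * x2m)) - ((q:k)⁻¹ * (p12:k)⁻¹) • ((x2m * x1m - (p12:k)⁻¹ • (x1m * x2m)) * x2m)) * x2) = ((1 + (q:k)) * (1 - (q:k)⁻¹^2)) • ((x2m * x1m - (p12:k)⁻¹ • (x1m * x2m)) * ((g2:U) * (f2:U))) := by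

  have hq0 : (q:k) ≠ 0 := q.ne_zero
  have hp0 : (p12:k) ≠ 0 := p12.ne_zero
  have hp21 : (p21:k) = (q:k)⁻¹^3 * (p12:k)⁻¹ := by
    field_simp at hq ⊢
    linear_combination hq
  have c1 : ∀ y : U, x2 * (x1m * y) = (p12:k) • (x1m * (x2 * y)) := by
    intro y
    have h := sub_eq_zero.mp h21
    calc x2 * (x1m * y) = (x2 * x1m) * y := by rw [mul_assoc]
    _ = ((p12:k) • (x1m * x2)) * y := by rw [h]
    _ = (p12:k) • (x1m * (x2 * y)) := by rw [smul_mul_assoc, mul_assoc]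
  have c1' : x2 * x1m = (p12:k) • (x1m * x2) := sub_eq_zero.mp h21
  have h22' : x2 * x2m = (q:k) • (x2m * x2) + (1 - (g2:U) * f2) := by
    rw [← h22]; abel
  have c2 : ∀ y : U, x2 * (x2m * y) = (q:k) • (x2m * (x2 * y)) + y - (g2:U) * ((f2:U) * y) := by
    intro y
    calc x2 * (x2m * y) = (x2 * x2m) * y := by rw [mul_assoc]
    _ = ((q:k) • (x2m * x2) + (1 - (g2:U) * f2)) * y := by rw [h22']
    _ = (q:k) • (x2m * (x2 * y)) + y - (g2:U) * ((f2:U) * y) := by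
        rw [add_mul, sub_mul, smul_mul_assoc, mul_assoc, one_mul, mul_assoc]
        abel
  have c2' : x2 * x2m = (q:k) • (x2m * x2) + 1 - (g2:U) * (f2:U) := by
    rw [h22']; abel
  have mkc : ∀ (a b : U) (c : k), a * b = c • (b * a) →
      ∀ y : U, a * (b * y) = c • (b * (a * y)) := by
    intro a b c h y
    calc a * (b * y) = (a * b) * y := by rw [mul_assoc]
    _ = c • (b * (a * y)) := by rw [h, smul_mul_assoc, mul_assoc]
  have c3 := mkc x2m g2 _ hx2mg2
  have c4 := mkc x2m f2 _ hx2mf2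
  have c5 := mkc x1m g2 _ hx1mg2
  have c6 := mkc x1m f2 _ hx1mf2
  have c7 := mkc x2 g2 _ hx2g2
  have c8 := mkc x2 f2 _ hx2f2
  simp only [mul_add, add_mul, mul_sub, sub_mul, smul_add, smul_sub, smul_smul,
    smul_mul_assoc, mul_smul_comm, mul_assoc, mul_one, one_mul,
    c1, c2, c3, c4, c5, c6, c7, c8, c1', c2', hx2mg2, hx2mf2, hx1mg2, hx1mf2,
    hx2g2, hx2f2, hp21]
  match_scalars <;> field_simp <;> ring
end

section
/- In the two-parameter quantum group U_q(g) of type G₂, one has [[x₁,x₂], x₂⁻] = (1 − q⁻³)·x₁. -/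
theorem stmt10 (k U : Type) [Field k] [Ring U] [Algebra k U]
    (q p12 p21 : kˣ) (hq : (p12:k) * (p21:k) = (q:k)⁻¹ ^ 3)
    (x1 x2 x1m x2m : U) (g1 g2 f1 f2 : Uˣ)
    (hg1g2 : (g1:U) * g2 = (g2:U) * g1)
    (hg1f1 : (g1:U) * f1 = (f1:U) * g1)
    (hg1f2 : (g1:U) * f2 = (f2:U) * g1)
    (hg2f1 : (g2:U) * f1 = (f1:U) * g2)
    (hg2f2 : (g2:U) * f2 = (f2:U) * g2)
    (hf1f2 : (f1:U) * f2 = (f2:U) * f1)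
    (hx1g1 : x1 * g1 = ((q:k)^3) • ((g1:U) * x1))
    (hx1g2 : x1 * g2 = (p12:k) • ((g2:U) * x1))
    (hx2g1 : x2 * g1 = (p21:k) • ((g1:U) * x2))
    (hx2g2 : x2 * g2 = (q:k) • ((g2:U) * x2))
    (hx1f1 : x1 * f1 = ((q:k)^3) • ((f1:U) * x1))
    (hx1f2 : x1 * f2 = (p21:k) • ((f2:U) * x1))
    (hx2f1 : x2 * f1 = (p12:k) • ((f1:U) * x2))
    (hx2f2 : x2 * f2 = (q:k) • ((f2:U) * x2))
    (hx1mg1 : x1m * g1 = ((q:k)^3)⁻¹ • ((g1:U) * x1m))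
    (hx1mg2 : x1m * g2 = (p12:k)⁻¹ • ((g2:U) * x1m))
    (hx2mg1 : x2m * g1 = (p21:k)⁻¹ • ((g1:U) * x2m))
    (hx2mg2 : x2m * g2 = (q:k)⁻¹ • ((g2:U) * x2m))
    (hx1mf1 : x1m * f1 = ((q:k)^3)⁻¹ • ((f1:U) * x1m))
    (hx1mf2 : x1m * f2 = (p21:k)⁻¹ • ((f2:U) * x1m))
    (hx2mf1 : x2m * f1 = (p12:k)⁻¹ • ((f1:U) * x2m))
    (hx2mf2 : x2m * f2 = (q:k)⁻¹ • ((f2:U) * x2m))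
    (h11 : x1 * x1m - ((q:k)^3) • (x1m * x1) = 1 - (g1:U) * f1)
    (h12 : x1 * x2m - (p21:k) • (x2m * x1) = 0)
    (h21 : x2 * x1m - (p12:k) • (x1m * x2) = 0)
    (h22 : x2 * x2m - (q:k) • (x2m * x2) = 1 - (g2:U) * f2) :
    (x1 * x2 - (p12:k) • (x2 * x1)) * x2m - ((p21:k) * (q:k)) • (x2m * (x1 * x2 - (p12:k) • (x2 * x1))) = (1 - (q:k)⁻¹^3) • x1 := by
  rw [sub_eq_zero] at h12
  rw [sub_eq_iff_eq_add] at h22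
  have hgf : x1 * ((g2:U) * f2) = ((q:k)⁻¹^3) • ((g2:U) * f2 * x1) := by
    rw [← mul_assoc, hx1g2, smul_mul_assoc, mul_assoc, hx1f2, mul_smul_comm, smul_smul, ← hq,
      mul_comm (p12:k), mul_assoc]
  have e1 : x1 * (x2m * x2) = (p21:k) • (x2m * (x1 * x2)) := by
    rw [← mul_assoc, h12, smul_mul_assoc, mul_assoc]
  have e2 : x2 * (x2m * x1) = x1 - (g2:U) * f2 * x1 + (q:k) • (x2m * (x2 * x1)) := by
    rw [← mul_assoc, h22]
    simp only [add_mul, sub_mul, one_mul, smul_mul_assoc, mul_assoc]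
  simp only [sub_mul, mul_sub, add_mul, mul_add, smul_add, smul_sub, smul_smul,
    smul_mul_assoc, mul_smul_comm, mul_assoc, mul_one, one_mul, h12, h22, hgf, e1, e2]
  have hq' : (p12:k) * (p21:k) * (q:k)^3 = 1 := by
    rw [hq, ← mul_pow, inv_mul_cancel₀ q.ne_zero, one_pow]
  match_scalars <;> (try simp only [← hq]) <;>
    first
      | ring1
      | linear_combination hq'
      | linear_combination -hq'
      | linear_combination (q:k) * hq'
      | linear_combination (-(q:k)) * hq'
end

section
/- In the two-parameter quantum group U_q(g) of type G₂, one has [[x₁,x₂], [x₂⁻,x₁⁻]] = (1 − q⁻³)·(1 − g₁f₁g₂f₂). -/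
private lemma mulmul {U : Type} [Ring U] {a b d : U} (h : a*b = d) (c : U) :
    a*(b*c) = d*c := by rw [← mul_assoc, h]

set_option maxHeartbeats 1000000 in
theorem stmt11 (k U : Type) [Field k] [Ring U] [Algebra k U]
    (q p12 p21 : kˣ) (hq : (p12:k) * (p21:k) = (q:k)⁻¹ ^ 3)
    (x1 x2 x1m x2m : U) (g1 g2 f1 f2 : Uˣ)
    (hg1g2 : (g1:U) * g2 = (g2:U) * g1)
    (hg1f1 : (g1:U) * f1 = (f1:U) * g1)
    (hg1f2 : (g1:U) * f2 = (f2:U) * g1)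
    (hg2f1 : (g2:U) * f1 = (f1:U) * g2)
    (hg2f2 : (g2:U) * f2 = (f2:U) * g2)
    (hf1f2 : (f1:U) * f2 = (f2:U) * f1)
    (hx1g1 : x1 * g1 = ((q:k)^3) • ((g1:U) * x1))
    (hx1g2 : x1 * g2 = (p12:k) • ((g2:U) * x1))
    (hx2g1 : x2 * g1 = (p21:k) • ((g1:U) * x2))
    (hx2g2 : x2 * g2 = (q:k) • ((g2:U) * x2))
    (hx1f1 : x1 * f1 = ((q:k)^3) • ((f1:U) * x1))
    (hx1f2 : x1 * f2 = (p21:k) • ((f2:U) * x1))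
    (hx2f1 : x2 * f1 = (p12:k) • ((f1:U) * x2))
    (hx2f2 : x2 * f2 = (q:k) • ((f2:U) * x2))
    (hx1mg1 : x1m * g1 = ((q:k)^3)⁻¹ • ((g1:U) * x1m))
    (hx1mg2 : x1m * g2 = (p12:k)⁻¹ • ((g2:U) * x1m))
    (hx2mg1 : x2m * g1 = (p21:k)⁻¹ • ((g1:U) * x2m))
    (hx2mg2 : x2m * g2 = (q:k)⁻¹ • ((g2:U) * x2m))
    (hx1mf1 : x1m * f1 = ((q:k)^3)⁻¹ • ((f1:U) * x1m))
    (hx1mf2 : x1m * f2 = (p21:k)⁻¹ • ((f2:U) * x1m))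
    (hx2mf1 : x2m * f1 = (p12:k)⁻¹ • ((f1:U) * x2m))
    (hx2mf2 : x2m * f2 = (q:k)⁻¹ • ((f2:U) * x2m))
    (h11 : x1 * x1m - ((q:k)^3) • (x1m * x1) = 1 - (g1:U) * f1)
    (h12 : x1 * x2m - (p21:k) • (x2m * x1) = 0)
    (h21 : x2 * x1m - (p12:k) • (x1m * x2) = 0)
    (h22 : x2 * x2m - (q:k) • (x2m * x2) = 1 - (g2:U) * f2) :
    (x1 * x2 - (p12:k) • (x2 * x1)) * (x2m * x1m - (p12:k)⁻¹ • (x1m * x2m)) - ((q:k)^3 * (p12:k) * (p21:k) * (q:k)) • ((x2m * x1m - (p12:k)⁻¹ • (x1m * x2m)) * (x1 * x2 - (p12:k) • (x2 * x1))) = (1 - (q:k)⁻¹^3) • ((1:U) - ((g1:U) * (f1:U)) * ((g2:U) * (f2:U))) := by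
  have c11 : x1 * x1m = ((q:k)^3) • (x1m * x1) + (1 - (g1:U) * f1) := by
    rw [← h11]; abel
  have c12 : x1 * x2m = (p21:k) • (x2m * x1) := sub_eq_zero.mp h12
  have c21 : x2 * x1m = (p12:k) • (x1m * x2) := sub_eq_zero.mp h21
  have c22 : x2 * x2m = (q:k) • (x2m * x2) + (1 - (g2:U) * f2) := by
    rw [← h22]; abel
  simp only [mul_sub, sub_mul, mul_add, add_mul, smul_mul_assoc, mul_smul_comm,
    smul_smul, smul_add, smul_sub, mul_one, one_mul, mul_assoc,
    c11, c12, c21, c22, mulmul c11, mulmul c12, mulmul c21, mulmul c22,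
    hg1g2, hg1f1, hg1f2, hg2f1, hg2f2, hf1f2,
    mulmul hg1g2, mulmul hg1f1, mulmul hg1f2, mulmul hg2f1, mulmul hg2f2, mulmul hf1f2,
    hx1g1, hx1g2, hx2g1, hx2g2, hx1f1, hx1f2, hx2f1, hx2f2,
    mulmul hx1g1, mulmul hx1g2, mulmul hx2g1, mulmul hx2g2,
    mulmul hx1f1, mulmul hx1f2, mulmul hx2f1, mulmul hx2f2,
    hx1mg1, hx1mg2, hx2mg1, hx2mg2, hx1mf1, hx1mf2, hx2mf1, hx2mf2,
    mulmul hx1mg1, mulmul hx1mg2, mulmul hx2mg1, mulmul hx2mg2,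
    mulmul hx1mf1, mulmul hx1mf2, mulmul hx2mf1, mulmul hx2mf2]
  have hqne : (q:k) ≠ 0 := q.ne_zero
  have h12ne : (p12:k) ≠ 0 := p12.ne_zero
  have hp21 : (p21:k) = ((q:k)⁻¹^3) * ((p12:k))⁻¹ := by
    rw [← hq, mul_comm ((p12:k)) ((p21:k)), mul_inv_cancel_right₀ h12ne]
  match_scalars <;>
  · simp only [hp21]
    field_simp
    try ring
end

section
/- In the two-parameter quantum group U_q(g) of type G₂, one has [[x₂,x₁], [x₁⁻,x₂⁻]] = (1 − q⁻³)·(1 − g₂f₂g₁f₁). -/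
private lemma aux_swap {k U : Type} [Field k] [Ring U] [Algebra k U]
    {c : k} {a b : U} (h : a * b = c • (b * a)) (y : U) :
    a * (b * y) = c • (b * (a * y)) := by
  rw [← mul_assoc, h, smul_mul_assoc, mul_assoc]

private lemma aux_comm {U : Type} [Ring U] {a b : U} (h : a * b = b * a) (y : U) :
    a * (b * y) = b * (a * y) := by
  rw [← mul_assoc, h, mul_assoc]

set_option maxHeartbeats 4000000 in
theorem stmt12 (k U : Type) [Field k] [Ring U] [Algebra k U]
    (q p12 p21 : kˣ) (hq : (p12:k) * (p21:k) = (q:k)⁻¹ ^ 3)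
    (x1 x2 x1m x2m : U) (g1 g2 f1 f2 : Uˣ)
    (hg1g2 : (g1:U) * g2 = (g2:U) * g1)
    (hg1f1 : (g1:U) * f1 = (f1:U) * g1)
    (hg1f2 : (g1:U) * f2 = (f2:U) * g1)
    (hg2f1 : (g2:U) * f1 = (f1:U) * g2)
    (hg2f2 : (g2:U) * f2 = (f2:U) * g2)
    (hf1f2 : (f1:U) * f2 = (f2:U) * f1)
    (hx1g1 : x1 * g1 = ((q:k)^3) • ((g1:U) * x1))
    (hx1g2 : x1 * g2 = (p12:k) • ((g2:U) * x1))
    (hx2g1 : x2 * g1 = (p21:k) • ((g1:U) * x2))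
    (hx2g2 : x2 * g2 = (q:k) • ((g2:U) * x2))
    (hx1f1 : x1 * f1 = ((q:k)^3) • ((f1:U) * x1))
    (hx1f2 : x1 * f2 = (p21:k) • ((f2:U) * x1))
    (hx2f1 : x2 * f1 = (p12:k) • ((f1:U) * x2))
    (hx2f2 : x2 * f2 = (q:k) • ((f2:U) * x2))
    (hx1mg1 : x1m * g1 = ((q:k)^3)⁻¹ • ((g1:U) * x1m))
    (hx1mg2 : x1m * g2 = (p12:k)⁻¹ • ((g2:U) * x1m))
    (hx2mg1 : x2m * g1 = (p21:k)⁻¹ • ((g1:U) * x2m))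
    (hx2mg2 : x2m * g2 = (q:k)⁻¹ • ((g2:U) * x2m))
    (hx1mf1 : x1m * f1 = ((q:k)^3)⁻¹ • ((f1:U) * x1m))
    (hx1mf2 : x1m * f2 = (p21:k)⁻¹ • ((f2:U) * x1m))
    (hx2mf1 : x2m * f1 = (p12:k)⁻¹ • ((f1:U) * x2m))
    (hx2mf2 : x2m * f2 = (q:k)⁻¹ • ((f2:U) * x2m))
    (h11 : x1 * x1m - ((q:k)^3) • (x1m * x1) = 1 - (g1:U) * f1)
    (h12 : x1 * x2m - (p21:k) • (x2m * x1) = 0)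
    (h21 : x2 * x1m - (p12:k) • (x1m * x2) = 0)
    (h22 : x2 * x2m - (q:k) • (x2m * x2) = 1 - (g2:U) * f2) :
    (x2 * x1 - (p21:k) • (x1 * x2)) * (x1m * x2m - (p21:k)⁻¹ • (x2m * x1m)) - ((q:k)^3 * (p12:k) * (p21:k) * (q:k)) • ((x1m * x2m - (p21:k)⁻¹ • (x2m * x1m)) * (x2 * x1 - (p21:k) • (x1 * x2))) = (1 - (q:k)⁻¹^3) • ((1:U) - ((g2:U) * (f2:U)) * ((g1:U) * (f1:U))) := by
  -- base ordered forms of the quadratic relations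
  have e11 : x1 * x1m = ((q:k)^3) • (x1m * x1) + (1 - (g1:U) * f1) := by
    rw [← h11]; abel
  have e22 : x2 * x2m = (q:k) • (x2m * x2) + (1 - (g2:U) * f2) := by
    rw [← h22]; abel
  have e12 : x1 * x2m = (p21:k) • (x2m * x1) := by
    have := sub_eq_zero.mp h12; exact this
  have e21 : x2 * x1m = (p12:k) • (x1m * x2) := by
    have := sub_eq_zero.mp h21; exact this
  -- parametric versions
  have p11 : ∀ y : U, x1 * (x1m * y) = ((q:k)^3) • (x1m * (x1 * y)) + (y - (g1:U) * ((f1:U) * y)) := by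
    intro y
    rw [← mul_assoc, e11, add_mul, sub_mul, one_mul, smul_mul_assoc, mul_assoc, mul_assoc]
  have p22 : ∀ y : U, x2 * (x2m * y) = (q:k) • (x2m * (x2 * y)) + (y - (g2:U) * ((f2:U) * y)) := by
    intro y
    rw [← mul_assoc, e22, add_mul, sub_mul, one_mul, smul_mul_assoc, mul_assoc, mul_assoc]
  have p12' := aux_swap e12
  have p21' := aux_swap e21
  -- parametric versions of x-vs-group swaps
  have a1 := aux_swap hx1g1
  have a2 := aux_swap hx1g2
  have a3 := aux_swap hx2g1
  have a4 := aux_swap hx2g2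
  have a5 := aux_swap hx1f1
  have a6 := aux_swap hx1f2
  have a7 := aux_swap hx2f1
  have a8 := aux_swap hx2f2
  have b1 := aux_swap hx1mg1
  have b2 := aux_swap hx1mg2
  have b3 := aux_swap hx2mg1
  have b4 := aux_swap hx2mg2
  have b5 := aux_swap hx1mf1
  have b6 := aux_swap hx1mf2
  have b7 := aux_swap hx2mf1
  have b8 := aux_swap hx2mf2
  -- unit ordering: g2 < f2 < g1 < f1
  have u1 : (g1:U) * g2 = (g2:U) * g1 := hg1g2
  have u2 : (g1:U) * f2 = (f2:U) * g1 := hg1f2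
  have u3 : (f1:U) * g2 = (g2:U) * f1 := hg2f1.symm
  have u4 : (f1:U) * f2 = (f2:U) * f1 := hf1f2
  have v1 := aux_comm u1
  have v2 := aux_comm u2
  have v3 := aux_comm u3
  have v4 := aux_comm u4
  -- eliminate p21
  have hqne : (q:k) ≠ 0 := q.ne_zero
  have hp12ne : (p12:k) ≠ 0 := p12.ne_zero
  have hp21ne : (p21:k) ≠ 0 := p21.ne_zero
  have hp21 : (p21:k) = ((q:k)^3)⁻¹ * (p12:k)⁻¹ := by
    field_simp
    field_simp at hq
    linear_combination hq
  simp only [mul_add, add_mul, mul_sub, sub_mul, smul_add, smul_sub, smul_smul,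
    mul_smul_comm, smul_mul_assoc, mul_assoc, mul_one, one_mul,
    p11, p22, p12', p21', e11, e22, e12, e21,
    a1, a2, a3, a4, a5, a6, a7, a8, b1, b2, b3, b4, b5, b6, b7, b8,
    hx1g1, hx1g2, hx2g1, hx2g2, hx1f1, hx1f2, hx2f1, hx2f2,
    hx1mg1, hx1mg2, hx2mg1, hx2mg2, hx1mf1, hx1mf2, hx2mf1, hx2mf2,
    u1, u2, u3, u4, v1, v2, v3, v4]
  rw [hp21]
  match_scalars <;> field_simp <;> ring
end

section
/- In the two-parameter quantum group U_q(g) of type G₂, one has [[[[x₁,x₂],x₂],x₂], x₂⁻] = q²(1 − q⁻³)·[[x₁,x₂],x₂]. -/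
set_option maxHeartbeats 2000000 in
theorem stmt15 (k U : Type) [Field k] [Ring U] [Algebra k U]
    (q p12 p21 : kˣ) (hq : (p12:k) * (p21:k) = (q:k)⁻¹ ^ 3)
    (x1 x2 x1m x2m : U) (g1 g2 f1 f2 : Uˣ)
    (hg1g2 : (g1:U) * g2 = (g2:U) * g1)
    (hg1f1 : (g1:U) * f1 = (f1:U) * g1)
    (hg1f2 : (g1:U) * f2 = (f2:U) * g1)
    (hg2f1 : (g2:U) * f1 = (f1:U) * g2)
    (hg2f2 : (g2:U) * f2 = (f2:U) * g2)
    (hf1f2 : (f1:U) * f2 = (f2:U) * f1)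
    (hx1g1 : x1 * g1 = ((q:k)^3) • ((g1:U) * x1))
    (hx1g2 : x1 * g2 = (p12:k) • ((g2:U) * x1))
    (hx2g1 : x2 * g1 = (p21:k) • ((g1:U) * x2))
    (hx2g2 : x2 * g2 = (q:k) • ((g2:U) * x2))
    (hx1f1 : x1 * f1 = ((q:k)^3) • ((f1:U) * x1))
    (hx1f2 : x1 * f2 = (p21:k) • ((f2:U) * x1))
    (hx2f1 : x2 * f1 = (p12:k) • ((f1:U) * x2))
    (hx2f2 : x2 * f2 = (q:k) • ((f2:U) * x2))
    (hx1mg1 : x1m * g1 = ((q:k)^3)⁻¹ • ((g1:U) * x1m))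
    (hx1mg2 : x1m * g2 = (p12:k)⁻¹ • ((g2:U) * x1m))
    (hx2mg1 : x2m * g1 = (p21:k)⁻¹ • ((g1:U) * x2m))
    (hx2mg2 : x2m * g2 = (q:k)⁻¹ • ((g2:U) * x2m))
    (hx1mf1 : x1m * f1 = ((q:k)^3)⁻¹ • ((f1:U) * x1m))
    (hx1mf2 : x1m * f2 = (p21:k)⁻¹ • ((f2:U) * x1m))
    (hx2mf1 : x2m * f1 = (p12:k)⁻¹ • ((f1:U) * x2m))
    (hx2mf2 : x2m * f2 = (q:k)⁻¹ • ((f2:U) * x2m))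
    (h11 : x1 * x1m - ((q:k)^3) • (x1m * x1) = 1 - (g1:U) * f1)
    (h12 : x1 * x2m - (p21:k) • (x2m * x1) = 0)
    (h21 : x2 * x1m - (p12:k) • (x1m * x2) = 0)
    (h22 : x2 * x2m - (q:k) • (x2m * x2) = 1 - (g2:U) * f2) :
    (((x1 * x2 - (p12:k) • (x2 * x1)) * x2 - ((p12:k) * (q:k)) • (x2 * (x1 * x2 - (p12:k) • (x2 * x1)))) * x2 - ((p12:k) * (q:k)^2) • (x2 * ((x1 * x2 - (p12:k) • (x2 * x1)) * x2 - ((p12:k) * (q:k)) • (x2 * (x1 * x2 - (p12:k) • (x2 * x1)))))) * x2m - ((p21:k) * (q:k)^3) • (x2m * (((x1 * x2 - (p12:k) • (x2 * x1)) * x2 - ((p12:k) * (q:k)) • (x2 * (x1 * x2 - (p12:k) • (x2 * x1)))) * x2 - ((p12:k) * (q:k)^2) • (x2 * ((x1 * x2 - (p12:k) • (x2 * x1)) * x2 - ((p12:k) * (q:k)) • (x2 * (x1 * x2 - (p12:k) • (x2 * x1))))))) = ((q:k)^2 * (1 - (q:k)⁻¹^3)) • ((x1 * x2 - (p12:k)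 • (x2 * x1)) * x2 - ((p12:k) * (q:k)) • (x2 * (x1 * x2 - (p12:k) • (x2 * x1)))) := by

  have r1 : x1 * x2m = (p21:k) • (x2m * x1) := by
    have h := sub_eq_zero.mp h12
    linear_combination (norm := noncomm_ring) h
  have r2 : x2 * x2m = (q:k) • (x2m * x2) + 1 - (g2:U) * f2 := by
    linear_combination (norm := noncomm_ring) h22
  have r3 : x1 * ((g2:U) * f2) = ((p12:k) * (p21:k)) • ((g2:U) * ((f2:U) * x1)) := by
    calc x1 * ((g2:U) * f2) = (x1 * g2) * f2 := by rw [mul_assoc]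
    _ = (p12:k) • ((g2:U) * (x1 * f2)) := by rw [hx1g2, smul_mul_assoc, mul_assoc]
    _ = (p12:k) • ((g2:U) * ((p21:k) • ((f2:U) * x1))) := by rw [hx1f2]
    _ = ((p12:k) * (p21:k)) • ((g2:U) * ((f2:U) * x1)) := by
        rw [mul_smul_comm, smul_smul]
  have r4 : x2 * ((g2:U) * f2) = ((q:k) * (q:k)) • ((g2:U) * ((f2:U) * x2)) := by
    calc x2 * ((g2:U) * f2) = (x2 * g2) * f2 := by rw [mul_assoc]
    _ = (q:k) • ((g2:U) * (x2 * f2)) := by rw [hx2g2, smul_mul_assoc, mul_assoc]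
    _ = (q:k) • ((g2:U) * ((q:k) • ((f2:U) * x2))) := by rw [hx2f2]
    _ = ((q:k) * (q:k)) • ((g2:U) * ((f2:U) * x2)) := by
        rw [mul_smul_comm, smul_smul]
  have r1' : ∀ t : U, x1 * (x2m * t) = (p21:k) • (x2m * (x1 * t)) := fun t => by
    have h := congrArg (· * t) r1
    simpa [mul_assoc, smul_mul_assoc] using h
  have r2' : ∀ t : U, x2 * (x2m * t)
      = (q:k) • (x2m * (x2 * t)) + t - (g2:U) * ((f2:U) * t) := fun t => by
    have h := congrArg (· * t) r2
    simpa [mul_assoc, smul_mul_assoc, sub_mul, add_mul, one_mul] using h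
  have r3' : ∀ t : U, x1 * ((g2:U) * ((f2:U) * t))
      = ((p12:k) * (p21:k)) • ((g2:U) * ((f2:U) * (x1 * t))) := fun t => by
    have h := congrArg (· * t) r3
    simpa [mul_assoc, smul_mul_assoc] using h
  have r4' : ∀ t : U, x2 * ((g2:U) * ((f2:U) * t))
      = ((q:k) * (q:k)) • ((g2:U) * ((f2:U) * (x2 * t))) := fun t => by
    have h := congrArg (· * t) r4
    simpa [mul_assoc, smul_mul_assoc] using h
  have hq0 : (q:k) ≠ 0 := Units.ne_zero q
  have hp0 : (p12:k) ≠ 0 := Units.ne_zero p12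
  have hp : (p21:k) = (q:k)⁻¹ ^ 3 * (p12:k)⁻¹ := by
    have hp12 : (p12:k) ≠ 0 := Units.ne_zero p12
    field_simp at hq ⊢
    linear_combination hq
  simp only [sub_mul, add_mul, smul_mul_assoc, mul_sub, mul_add, mul_smul_comm, smul_sub,
    smul_add, smul_smul, mul_assoc, mul_one, one_mul, r1, r2, r3, r4, r1', r2', r3', r4']
  match_scalars
  all_goals try (simp only [hp]; field_simp; ring)
  all_goals try (field_simp; ring)
  all_goals try (rw [sub_eq_zero]; field_simp; try ring)
  all_goals try (rw [neg_add_eq_zero]; field_simp; try ring)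
end
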